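/- Every domain D in the d-regular tree T_d with |D| ≥ 2 satisfies |R(D)| ≤ τ(D) ≤ |D| − 2, and the equality τ(D) = |D| − 2 holds if and only if ∂D = D. -/

import Mathlib

/-- Inner vertex boundary of a finite vertex set `D`: vertices of `D` having a neighbor
outside `D`. -/
noncomputable def innerBoundary {V : Type*} (G : SimpleGraph V) (D : Finset V) : Finset V := by
  classical exact D.filter (fun x => ∃ y, y ∉ D ∧ G.Adj x y)

/-- Outer vertex boundary of `D`: vertices outside `D` having a neighbor in `D`. -/
def outerBoundary {V : Type*} (G : SimpleGraph V) (D : Finset V) : Set V :=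
  {y | y ∉ D ∧ ∃ x ∈ D, G.Adj x y}

/-- Number of neighbors of `x` lying in `D`. -/
noncomputable def degIn {V : Type*} (G : SimpleGraph V) (D : Finset V) (x : V) : ℕ := by
  classical exact (D.filter (fun y => G.Adj x y)).card

/-- A domain: a finite nonempty vertex set whose induced subgraph is connected. -/
def IsGraphDomain {V : Type*} (G : SimpleGraph V) (D : Finset V) : Prop :=
  D.Nonempty ∧ (G.induce (↑D : Set V)).Connected

/-- `G` is a `d`-regular tree: connected, acyclic, and every vertex has degree `d`. -/
def IsRegularTree {V : Type*} (G : SimpleGraph V) (d : ℕ) : Prop :=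
  G.Connected ∧ G.IsAcyclic ∧ ∀ v : V, (G.neighborSet v).ncard = d

/-- Boundary branching excess `τ(D) = Σ_{x ∈ ∂D} (deg_D(x) − 1)`. -/
noncomputable def tauD {V : Type*} (G : SimpleGraph V) (D : Finset V) : ℕ :=
  ∑ x ∈ innerBoundary G D, (degIn G D x - 1)

/-- Residual boundary `R(D) = {x ∈ ∂D : deg_D(x) ≥ 2}`. -/
noncomputable def residualBoundary {V : Type*} (G : SimpleGraph V) (D : Finset V) : Finset V := by
  classical exact (innerBoundary G D).filter (fun x => 2 ≤ degIn G D x)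

/-- `D` is isoperimetrically optimal: its inner boundary is smallest among all domains
of the same cardinality. -/
def IsOptimal {V : Type*} (G : SimpleGraph V) (D : Finset V) : Prop :=
  ∀ D' : Finset V, IsGraphDomain G D' → D'.card = D.card →
    (innerBoundary G D).card ≤ (innerBoundary G D').card


/-!
The subgraph induced on `D` is a tree, so `∑_{x ∈ D} deg_D x = 2 (|D| - 1)`. Interior vertices
have all `d` neighbours in `D`, and boundary vertices have `deg_D x ≥ 1`, so splitting the sum
gives `d · |D ∖ ∂D| + τ(D) + |∂D| + 2 = 2 |D|`, that is,
`τ(D) = |D| - 2 - (d - 1) · |D ∖ ∂D|`, which equals `|D| - 2` exactly when `D` has no interior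
vertex, as `d ≥ 2`.
The bound `|R(D)| ≤ τ(D)` holds because each `x ∈ R(D)` contributes at least `1` to `τ(D)`.
-/

open Finset SimpleGraph

section

variable {V : Type*} {G : SimpleGraph V} {D : Finset V}

lemma mem_innerBoundary {x : V} :
    x ∈ innerBoundary G D ↔ x ∈ D ∧ ∃ y, y ∉ D ∧ G.Adj x y := by
  classical
  simp [innerBoundary]

variable (G D) in
lemma innerBoundary_subset : innerBoundary G D ⊆ D :=
  fun _ hx => (mem_innerBoundary.1 hx).1

lemma degIn_eq_ncard (x : V) : degIn G D x = (G.neighborSet x ∩ D).ncard := by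
  classical
  rw [degIn, ← Set.ncard_coe_finset]
  congr 1
  ext y
  simp [and_comm]

lemma degree_induce_eq_degIn (v : (D : Set V)) [Fintype ((G.induce (D : Set V)).neighborSet v)] :
    (G.induce (D : Set V)).degree v = degIn G D v := by
  rw [degIn_eq_ncard, ← card_neighborSet_eq_degree, Set.fintypeCard_eq_ncard,
    ← Set.ncard_image_of_injective _ Subtype.val_injective]
  congr 1
  ext y
  simp [and_comm]

lemma degIn_eq_ncard_neighborSet {x : V} (hx : x ∈ D) (hx' : x ∉ innerBoundary G D) :
    degIn G D x = (G.neighborSet x).ncard := by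
  have hsub : G.neighborSet x ⊆ D := fun y hy => by
    by_contra hyD
    exact hx' (mem_innerBoundary.2 ⟨hx, y, hyD, hy⟩)
  rw [degIn_eq_ncard, Set.inter_eq_left.2 hsub]

lemma one_le_degIn (hconn : (G.induce (D : Set V)).Connected) (hcard : 2 ≤ #D) {x : V}
    (hx : x ∈ D) : 1 ≤ degIn G D x := by
  classical
  have : Nontrivial (D : Set V) := Set.nontrivial_coe_sort.2 (one_lt_card_iff_nontrivial.1 hcard)
  rw [← degree_induce_eq_degIn ⟨x, hx⟩]
  exact hconn.preconnected.degree_pos_of_nontrivial _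

lemma sum_degIn_of_isAcyclic (hG : G.IsAcyclic) (hconn : (G.induce (D : Set V)).Connected) :
    ∑ x ∈ D, degIn G D x = 2 * (#D - 1) := by
  classical
  have htree : (G.induce (D : Set V)).IsTree := ⟨hconn, hG.induce _⟩
  have hedges := htree.card_edgeFinset
  simp only [coe_sort_coe, Fintype.card_coe] at hedges
  rw [← sum_coe_sort D, ← hedges, Nat.add_sub_cancel, ← sum_degrees_eq_twice_card_edges]
  exact Fintype.sum_equiv (Equiv.refl _) _ _ fun v => (degree_induce_eq_degIn v).symm

lemma card_residualBoundary_le_tauD : #(residualBoundary G D) ≤ tauD G D := by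
  classical
  calc #(residualBoundary G D)
      = ∑ x ∈ residualBoundary G D, 1 := card_eq_sum_ones _
    _ ≤ ∑ x ∈ residualBoundary G D, (degIn G D x - 1) := sum_le_sum fun x hx => by
        simp only [residualBoundary, mem_filter] at hx
        omega
    _ ≤ tauD G D := sum_le_sum_of_subset (filter_subset _ _)

lemma mul_card_interior_add_tauD_add_card_innerBoundary [DecidableEq V] {d : ℕ}
    (hG : G.IsAcyclic) (hreg : ∀ v, (G.neighborSet v).ncard = d)
    (hconn : (G.induce (D : Set V)).Connected) (hcard : 2 ≤ #D) :
    d * #(D \ innerBoundary G D) + (tauD G D + #(innerBoundary G D)) + 2 = 2 * #D := by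
  have hinterior : ∑ x ∈ D \ innerBoundary G D, degIn G D x = d * #(D \ innerBoundary G D) := by
    rw [mul_comm]
    refine sum_const_nat fun x hx => ?_
    rw [mem_sdiff] at hx
    rw [degIn_eq_ncard_neighborSet hx.1 hx.2, hreg]
  have hboundary : ∑ x ∈ innerBoundary G D, degIn G D x = tauD G D + #(innerBoundary G D) := by
    rw [tauD, card_eq_sum_ones, ← sum_add_distrib]
    exact sum_congr rfl fun x hx =>
      (Nat.sub_add_cancel (one_le_degIn hconn hcard (innerBoundary_subset G D hx))).symm
  have hsplit := sum_sdiff (f := degIn G D) (innerBoundary_subset G D)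
  rw [hinterior, hboundary, sum_degIn_of_isAcyclic hG hconn] at hsplit
  omega

end

/-- For every domain `D` with `|D| ≥ 2`: `|R(D)| ≤ τ(D) ≤ |D| − 2`, with equality
`τ(D) = |D| − 2` iff `∂D = D`. -/
theorem stmt_9 {V : Type*} (d : ℕ) (hd : 2 ≤ d) (T : SimpleGraph V)
    (hT : IsRegularTree T d) (D : Finset V) (hD : IsGraphDomain T D) (hcard : 2 ≤ D.card) :
    (residualBoundary T D).card ≤ tauD T D ∧
    tauD T D ≤ D.card - 2 ∧
    (tauD T D = D.card - 2 ↔ innerBoundary T D = D) := by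
  classical
  obtain ⟨-, hacyclic, hreg⟩ := hT
  have hcount := mul_card_interior_add_tauD_add_card_innerBoundary hacyclic hreg hD.2 hcard
  have hsplit := card_sdiff_add_card_eq_card (innerBoundary_subset T D)
  have hinterior : 2 * #(D \ innerBoundary T D) ≤ d * #(D \ innerBoundary T D) :=
    Nat.mul_le_mul_right _ hd
  have hfull : innerBoundary T D = D ↔ #(D \ innerBoundary T D) = 0 := by
    rw [card_eq_zero, sdiff_eq_empty_iff_subset]
    exact ⟨fun h => h.ge, (innerBoundary_subset T D).antisymm⟩
  have hno_interior : #(D \ innerBoundary T D) = 0 → d * #(D \ innerBoundary T D) = 0 :=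
    fun h => by rw [h, mul_zero]
  refine ⟨card_residualBoundary_le_tauD, by omega, ?_⟩
  rw [hfull]
  omega
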